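/- The generating function Φ(x,y) = Σ_{[T₁,T₂]} x^{m(T₁)} y^{|T₁|}, summed over intervals of the Tamari lattice where |T₁| is the number of nodes and m(T₁) is the number of nodes on the leftmost branch of the smaller tree T₁, satisfies the functional equation Φ(x,y) = 1 + x·y·Φ(x,y)·(xΦ(x,y) − Φ(1,y))/(x−1). -/

import Mathlib

/-- Unlabelled binary trees. -/
inductive Tree0 where
  | leaf : Tree0
  | node : Tree0 → Tree0 → Tree0
deriving DecidableEq

namespace Tree0

/-- Number of nodes. -/
def size : Tree0 → ℕ
  | leaf => 0
  | node l r => size l + size r + 1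

/-- Number of nodes on the leftmost branch. -/
def leftBranch : Tree0 → ℕ
  | leaf => 0
  | node l _ => leftBranch l + 1

/-- One right rotation somewhere in the tree: `y(x(A,B),C) ↦ x(A,y(B,C))`. -/
inductive Rot : Tree0 → Tree0 → Prop
  | root (A B C : Tree0) : Rot (node (node A B) C) (node A (node B C))
  | left {l l' : Tree0} (r : Tree0) : Rot l l' → Rot (node l r) (node l' r)
  | right (l : Tree0) {r r' : Tree0} : Rot r r' → Rot (node l r) (node l r')

/-- The Tamari order: transitive closure of right rotation. -/
def tamariLE : Tree0 → Tree0 → Prop := Relation.ReflTransGen Rot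

end Tree0

open Polynomial

/-- The divided-difference operator `Δ(g)(x) = (x·g(x) − g(1))/(x−1)`, an exact
division since the numerator vanishes at `x = 1` (`X - C 1` is monic). -/
noncomputable def deltaPoly (p : Polynomial ℤ) : Polynomial ℤ :=
  (Polynomial.X * p - Polynomial.C (p.eval 1)) /ₘ (Polynomial.X - Polynomial.C 1)

/-- `Δ` applied coefficientwise in `y` to a series in `y` with coefficients in `ℤ[x]`. -/
noncomputable def deltaS (F : PowerSeries (Polynomial ℤ)) : PowerSeries (Polynomial ℤ) :=
  PowerSeries.mk fun n => deltaPoly (PowerSeries.coeff n F)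

/-!
A tree lies below `node A B` in the Tamari order exactly when it is obtained from trees
`P ≤ A` and `Q ≤ B` by grafting a new node with left subtree `P` into the left branch of `Q`,
at one of the `m(Q) + 1` possible depths `k`; the result has left branch `m(P) + k + 1`, and
once `|P|` is fixed the decomposition is unique. Summing `x ^ (m(P) + k + 1)` over `k` gives
`x · x ^ m(P) · (x ^ (m(Q) + 1) - 1) / (x - 1) = x · x ^ m(P) · Δ(x ^ m(Q))`, so the coefficient
of `y ^ (n + 1)` in `Φ` is `x · Σ_{i + j = n} Φ_i · Δ Φ_j`.
-/

open Finset

theorem deltaPoly_eq_of_mul_eq {p q : ℤ[X]} (h : (X - C 1) * q = X * p - C (p.eval 1)) :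
    deltaPoly p = q := by
  rw [deltaPoly, ← h, mul_divByMonic_cancel_left _ (monic_X_sub_C 1)]

theorem deltaPoly_sum_X_pow {α : Type*} (s : Finset α) (m : α → ℕ) :
    deltaPoly (∑ a ∈ s, X ^ m a) = ∑ a ∈ s, ∑ k ∈ range (m a + 1), X ^ k := by
  apply deltaPoly_eq_of_mul_eq
  have hgeom (j : ℕ) : (X - C 1) * ∑ k ∈ range (j + 1), (X : ℤ[X]) ^ k = X * X ^ j - 1 := by
    rw [C_1, mul_comm, geom_sum_mul, pow_succ']
  rw [mul_sum, mul_sum, sum_congr rfl fun a _ => hgeom (m a), sum_sub_distrib, eval_finsetSum]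
  simp

namespace Tree0

theorem Rot.size_eq {T U : Tree0} (h : Rot T U) : T.size = U.size := by
  induction h with
  | root => simp only [size]; omega
  | left _ _ ih | right _ _ ih => simp only [size, ih]

theorem tamariLE.size_eq {T U : Tree0} (h : tamariLE T U) : T.size = U.size := by
  induction h with
  | refl => rfl
  | tail _ hrot ih => exact ih.trans hrot.size_eq

theorem tamariLE_node {l l' r r' : Tree0} (hl : tamariLE l l') (hr : tamariLE r r') :
    tamariLE (node l r) (node l' r') :=
  (hl.lift (node · r) fun _ _ => Rot.left r).trans (hr.lift (node l' ·) fun _ _ => Rot.right l')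

/-- Replace the subtree `S` at depth `k` of the left branch of `Q` by `node P S`. -/
def graft : ℕ → Tree0 → Tree0 → Tree0
  | 0, P, Q => node P Q
  | _ + 1, P, leaf => node P leaf
  | k + 1, P, node l r => node (graft k P l) r

theorem size_graft (k : ℕ) (P Q : Tree0) : (graft k P Q).size = P.size + Q.size + 1 := by
  induction k generalizing Q with
  | zero => rfl
  | succ k ih =>
    cases Q with
    | leaf => rfl
    | node l r => simp only [graft, size, ih]; omega

theorem leftBranch_graft {k : ℕ} (P : Tree0) {Q : Tree0} (hk : k ≤ Q.leftBranch) :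
    (graft k P Q).leftBranch = P.leftBranch + k + 1 := by
  induction k generalizing Q with
  | zero => rfl
  | succ k ih =>
    cases Q with
    | leaf => simp [leftBranch] at hk
    | node l r => simp only [graft, leftBranch, ih (Nat.le_of_succ_le_succ hk)]; omega

theorem graft_le_node {k : ℕ} (P : Tree0) {Q : Tree0} (hk : k ≤ Q.leftBranch) :
    tamariLE (graft k P Q) (node P Q) := by
  induction k generalizing Q with
  | zero => exact .refl
  | succ k ih =>
    cases Q with
    | leaf => simp [leftBranch] at hk
    | node l r =>
      exact (tamariLE_node (ih (Nat.le_of_succ_le_succ hk)) .refl).tail (Rot.root P l r)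

theorem graft_inj {k k' : ℕ} {P P' Q Q' : Tree0} (hk : k ≤ Q.leftBranch)
    (hk' : k' ≤ Q'.leftBranch) (hP : P.size = P'.size) (h : graft k P Q = graft k' P' Q') :
    k = k' ∧ P = P' ∧ Q = Q' := by
  induction k generalizing k' Q Q' with
  | zero =>
    cases k' with
    | zero => simp only [graft, node.injEq] at h; exact ⟨rfl, h⟩
    | succ k' =>
      cases Q' with
      | leaf => simp [leftBranch] at hk'
      | node l r =>
        simp only [graft, node.injEq] at h
        have := congrArg size h.1
        rw [size_graft] at this; omega
  | succ k ih =>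
    cases Q with
    | leaf => simp [leftBranch] at hk
    | node l r =>
      cases k' with
      | zero =>
        simp only [graft, node.injEq] at h
        have := congrArg size h.1
        rw [size_graft] at this; omega
      | succ k' =>
        cases Q' with
        | leaf => simp [leftBranch] at hk'
        | node l' r' =>
          simp only [graft, node.injEq] at h
          obtain ⟨rfl, rfl, rfl⟩ :=
            ih (Nat.le_of_succ_le_succ hk) (Nat.le_of_succ_le_succ hk') h.1
          exact ⟨rfl, rfl, by rw [h.2]⟩

/-- By `tamariLE_node_iff`, the trees below `node A B`. -/
def graftsBelow (A B : Tree0) : Set Tree0 :=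
  {T | ∃ k P Q, k ≤ Q.leftBranch ∧ T = graft k P Q ∧ tamariLE P A ∧ tamariLE Q B}

theorem graftsBelow_mono {A A' B B' : Tree0} (hA : tamariLE A A') (hB : tamariLE B B') :
    graftsBelow A B ⊆ graftsBelow A' B' := by
  rintro _ ⟨k, P, Q, hk, rfl, hPA, hQB⟩
  exact ⟨k, P, Q, hk, rfl, hPA.trans hA, hQB.trans hB⟩

theorem graft_mem_graftsBelow {k : ℕ} (P : Tree0) {Q : Tree0} (hk : k ≤ Q.leftBranch) :
    graft k P Q ∈ graftsBelow P Q :=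
  ⟨k, P, Q, hk, rfl, .refl, .refl⟩

theorem mem_graftsBelow_of_rot {T : Tree0} {k : ℕ} {P Q : Tree0} (hk : k ≤ Q.leftBranch)
    (h : Rot T (graft k P Q)) : T ∈ graftsBelow P Q := by
  induction k generalizing T Q with
  | zero =>
    cases h with
    | root _ B C => exact graft_mem_graftsBelow (k := 1) P (Q := node B C) (Nat.le_add_left 1 _)
    | left _ hl => exact graftsBelow_mono (.single hl) .refl (graft_mem_graftsBelow _ hk)
    | right _ hr =>
      exact graftsBelow_mono .refl (.single hr) (graft_mem_graftsBelow (k := 0) P (Nat.zero_le _))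
  | succ k ih =>
    cases Q with
    | leaf => simp [leftBranch] at hk
    | node l r =>
      replace hk : k ≤ l.leftBranch := Nat.le_of_succ_le_succ hk
      cases h with
      | root _ B C =>
        refine graftsBelow_mono .refl (.single (Rot.root l B C))
          (graft_mem_graftsBelow (k := k + 2) P ?_)
        simp only [leftBranch]; omega
      | left _ hl =>
        obtain ⟨k', P', l', hk', rfl, hP, hl⟩ := ih hk hl
        exact graftsBelow_mono hP (tamariLE_node hl .refl)
          (graft_mem_graftsBelow (k := k' + 1) P' (Q := node l' r) (Nat.succ_le_succ hk'))
      | right _ hr =>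
        exact graftsBelow_mono .refl (tamariLE_node .refl (.single hr))
          (graft_mem_graftsBelow (k := k + 1) P (Q := node l _) (Nat.succ_le_succ hk))

theorem mem_graftsBelow_of_tamariLE {T U A B : Tree0} (h : tamariLE T U)
    (hU : U ∈ graftsBelow A B) : T ∈ graftsBelow A B := by
  induction h using Relation.ReflTransGen.head_induction_on with
  | refl => exact hU
  | head hrot _ ih =>
    obtain ⟨k, P, Q, hk, rfl, hPA, hQB⟩ := ih
    exact graftsBelow_mono hPA hQB (mem_graftsBelow_of_rot hk hrot)

theorem tamariLE_node_iff {T A B : Tree0} : tamariLE T (node A B) ↔ T ∈ graftsBelow A B :=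
  ⟨fun h => mem_graftsBelow_of_tamariLE h (graft_mem_graftsBelow (k := 0) A (Nat.zero_le _)),
    fun ⟨_, P, _, hk, hT, hPA, hQB⟩ => hT ▸ (graft_le_node P hk).trans (tamariLE_node hPA hQB)⟩

theorem finite_setOf_size_le (n : ℕ) : {T : Tree0 | T.size ≤ n}.Finite := by
  induction n with
  | zero =>
    refine (Set.finite_singleton leaf).subset ?_
    rintro (_ | ⟨l, r⟩) hT
    · rfl
    · simp [size] at hT
  | succ n ih =>
    refine (((ih.prod ih).image fun p => node p.1 p.2).insert leaf).subset ?_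
    rintro (_ | ⟨l, r⟩) hT
    · exact Set.mem_insert _ _
    · replace hT : l.size + r.size + 1 ≤ n + 1 := hT
      exact Or.inr ⟨(l, r), ⟨(by omega : l.size ≤ n), (by omega : r.size ≤ n)⟩, rfl⟩

theorem finite_intervals (n : ℕ) :
    {t : Tree0 × Tree0 | tamariLE t.1 t.2 ∧ t.1.size = n}.Finite := by
  refine ((finite_setOf_size_le n).prod (finite_setOf_size_le n)).subset ?_
  rintro ⟨T, U⟩ ⟨hTU, hT⟩
  exact ⟨hT.le, (hTU.size_eq ▸ hT).le⟩

noncomputable def intervals (n : ℕ) : Finset (Tree0 × Tree0) := (finite_intervals n).toFinset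

theorem mem_intervals {n : ℕ} {t : Tree0 × Tree0} :
    t ∈ intervals n ↔ tamariLE t.1 t.2 ∧ t.1.size = n :=
  Set.Finite.mem_toFinset _

theorem intervals_zero : intervals 0 = {(leaf, leaf)} := by
  ext ⟨T, U⟩
  simp only [mem_intervals, Finset.mem_singleton, Prod.mk.injEq]
  constructor
  · rintro ⟨hTU, hT⟩
    have hU := hTU.size_eq ▸ hT
    cases T <;> cases U <;> simp_all [size]
  · rintro ⟨rfl, rfl⟩
    exact ⟨.refl, rfl⟩

def graftInterval (k : ℕ) (p q : Tree0 × Tree0) : Tree0 × Tree0 :=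
  (graft k p.1 q.1, node p.2 q.2)

theorem graftInterval_mem_intervals {i j k : ℕ} {p q : Tree0 × Tree0} (hp : p ∈ intervals i)
    (hq : q ∈ intervals j) (hk : k ≤ q.1.leftBranch) :
    graftInterval k p q ∈ intervals (i + j + 1) := by
  rw [mem_intervals] at *
  refine ⟨tamariLE_node_iff.2 ⟨k, p.1, q.1, hk, rfl, hp.1, hq.1⟩, ?_⟩
  rw [graftInterval, size_graft, hp.2, hq.2]

theorem graftInterval_inj {k k' : ℕ} {p p' q q' : Tree0 × Tree0} (hp : tamariLE p.1 p.2)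
    (hp' : tamariLE p'.1 p'.2) (hk : k ≤ q.1.leftBranch) (hk' : k' ≤ q'.1.leftBranch)
    (h : graftInterval k p q = graftInterval k' p' q') : k = k' ∧ p = p' ∧ q = q' := by
  simp only [graftInterval, Prod.mk.injEq, node.injEq] at h
  obtain ⟨hgraft, hp₂, hq₂⟩ := h
  have hsize : p.1.size = p'.1.size := by rw [hp.size_eq, hp'.size_eq, hp₂]
  obtain ⟨rfl, hp₁, hq₁⟩ := graft_inj hk hk' hsize hgraft
  exact ⟨rfl, Prod.ext hp₁ hp₂, Prod.ext hq₁ hq₂⟩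

theorem exists_graftInterval_eq {n : ℕ} {t : Tree0 × Tree0} (ht : t ∈ intervals (n + 1)) :
    ∃ p q k, p ∈ intervals p.1.size ∧ q ∈ intervals q.1.size ∧ p.1.size + q.1.size = n ∧
      k ≤ q.1.leftBranch ∧ graftInterval k p q = t := by
  obtain ⟨T, U⟩ := t
  obtain ⟨hTU, hT : T.size = n + 1⟩ := mem_intervals.1 ht
  cases U with
  | leaf => have : T.size = 0 := hTU.size_eq; omega
  | node A B =>
    obtain ⟨k, P, Q, hk, rfl, hPA, hQB⟩ := tamariLE_node_iff.1 hTU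
    rw [size_graft] at hT
    exact ⟨(P, A), (Q, B), k, mem_intervals.2 ⟨hPA, rfl⟩, mem_intervals.2 ⟨hQB, rfl⟩,
      Nat.succ_injective hT, hk, rfl⟩

theorem sum_intervals_succ {M : Type*} [AddCommMonoid M] (f : Tree0 × Tree0 → M) (n : ℕ) :
    ∑ t ∈ intervals (n + 1), f t = ∑ ij ∈ antidiagonal n, ∑ p ∈ intervals ij.1,
      ∑ q ∈ intervals ij.2, ∑ k ∈ range (q.1.leftBranch + 1), f (graftInterval k p q) := by
  have hsigma : ∑ ij ∈ antidiagonal n, ∑ p ∈ intervals ij.1, ∑ q ∈ intervals ij.2,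
      ∑ k ∈ range (q.1.leftBranch + 1), f (graftInterval k p q) =
      ∑ x ∈ (antidiagonal n).sigma fun ij => (intervals ij.1 ×ˢ intervals ij.2).sigma
        fun pq => range (pq.2.1.leftBranch + 1), f (graftInterval x.2.2 x.2.1.1 x.2.1.2) := by
    rw [sum_sigma]
    exact sum_congr rfl fun ij _ => by rw [sum_sigma, sum_product]
  rw [hsigma]
  symm
  refine sum_bij (fun x _ => graftInterval x.2.2 x.2.1.1 x.2.1.2) ?_ ?_ ?_ fun _ _ => rfl
  · rintro ⟨⟨i, j⟩, ⟨p, q⟩, k⟩ hx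
    simp only [mem_sigma, HasAntidiagonal.mem_antidiagonal, mem_product, mem_range] at hx
    obtain ⟨rfl, ⟨hp, hq⟩, hk⟩ := hx
    exact graftInterval_mem_intervals hp hq (Nat.le_of_lt_succ hk)
  · rintro ⟨⟨i, j⟩, ⟨p, q⟩, k⟩ hx ⟨⟨i', j'⟩, ⟨p', q'⟩, k'⟩ hx' h
    simp only [mem_sigma, HasAntidiagonal.mem_antidiagonal, mem_product, mem_range,
      mem_intervals] at hx hx'
    obtain ⟨-, ⟨⟨hp, rfl⟩, -, rfl⟩, hk⟩ := hx
    obtain ⟨-, ⟨⟨hp', rfl⟩, -, rfl⟩, hk'⟩ := hx'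
    obtain ⟨rfl, rfl, rfl⟩ :=
      graftInterval_inj hp hp' (Nat.le_of_lt_succ hk) (Nat.le_of_lt_succ hk') h
    rfl
  · intro t ht
    obtain ⟨p, q, k, hp, hq, hn, hk, rfl⟩ := exists_graftInterval_eq ht
    refine ⟨⟨(p.1.size, q.1.size), (p, q), k⟩, ?_, rfl⟩
    simp only [mem_sigma, HasAntidiagonal.mem_antidiagonal, mem_product, mem_range]
    exact ⟨hn, ⟨hp, hq⟩, Nat.lt_succ_of_le hk⟩

/-- `Φ_n`, the coefficient of `y ^ n` in `Φ`. -/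
noncomputable def intervalPoly (n : ℕ) : ℤ[X] :=
  ∑ t ∈ intervals n, X ^ t.1.leftBranch

theorem coeff_intervalPoly (n m : ℕ) : (intervalPoly n).coeff m =
    ({t : Tree0 × Tree0 | tamariLE t.1 t.2 ∧ t.1.size = n ∧ t.1.leftBranch = m}.ncard : ℤ) := by
  have hset : {t : Tree0 × Tree0 | tamariLE t.1 t.2 ∧ t.1.size = n ∧ t.1.leftBranch = m} =
      ↑((intervals n).filter fun t => t.1.leftBranch = m) := by
    ext t
    simp [mem_intervals, and_assoc]
  rw [hset, Set.ncard_coe_finset, intervalPoly, finsetSum_coeff]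
  simp [coeff_X_pow, sum_boole, eq_comm]

theorem intervalPoly_zero : intervalPoly 0 = 1 := by
  simp [intervalPoly, intervals_zero, leftBranch]

theorem intervalPoly_succ (n : ℕ) : intervalPoly (n + 1) =
    X * ∑ ij ∈ antidiagonal n, intervalPoly ij.1 * deltaPoly (intervalPoly ij.2) := by
  rw [intervalPoly, sum_intervals_succ, mul_sum]
  refine sum_congr rfl fun ij _ => ?_
  rw [intervalPoly, intervalPoly, deltaPoly_sum_X_pow, sum_mul_sum]
  simp only [mul_sum]
  refine sum_congr rfl fun p _ => sum_congr rfl fun q _ => sum_congr rfl fun k hk => ?_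
  rw [graftInterval, leftBranch_graft _ (Nat.le_of_lt_succ (mem_range.1 hk))]
  ring

end Tree0

/-- The generating function `Φ(x,y) = Σ_{[T₁,T₂]} x^{m(T₁)} y^{|T₁|}`
over intervals of the Tamari lattice (`m(T₁)` = number of nodes on the leftmost branch
of the smaller tree) satisfies `Φ = 1 + x·y·Φ·(xΦ − Φ(1,y))/(x−1)`. -/
theorem tamari_interval_functional_equation (Φ : PowerSeries (Polynomial ℤ))
    (hΦ : ∀ n m : ℕ,
      (PowerSeries.coeff n Φ).coeff m =
        (Set.ncard {p : Tree0 × Tree0 |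
            Tree0.tamariLE p.1 p.2 ∧ p.1.size = n ∧ p.1.leftBranch = m} : ℤ)) :
    Φ = 1 + (PowerSeries.C (Polynomial.X : Polynomial ℤ)) * PowerSeries.X * Φ
          * deltaS Φ := by
  obtain rfl : Φ = PowerSeries.mk Tree0.intervalPoly := by
    ext n m
    rw [hΦ, PowerSeries.coeff_mk, Tree0.coeff_intervalPoly]
  ext (_ | n) : 1
  · simp [Tree0.intervalPoly_zero]
  · rw [mul_assoc, mul_assoc, map_add, PowerSeries.coeff_one, if_neg n.succ_ne_zero, zero_add,
      PowerSeries.coeff_C_mul, PowerSeries.coeff_succ_X_mul, PowerSeries.coeff_mul]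
    simp only [deltaS, PowerSeries.coeff_mk]
    exact Tree0.intervalPoly_succ n
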